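/- Let C be a k-coalgebra with comultiplication Δ and counit ε, and let T be the forgetful functor from finite-dimensional right C-comodules to finite-dimensional vector spaces. Regard C as a realization of Coend(T) via i_X(β ⊗ x) = β(x_(0))x_(1). Then the coalgebra structure (Δ_C, ε_C) induced on C by the universal property of Coend(T) (from the comatrix coalgebra structures on the Hom_k(X,X)) coincides with the original coalgebra structure (Δ, ε) of C. In particular Coend(T) ≅ C as coalgebras. -/

import Mathlib

/- STATEMENT 7: for a k-coalgebra C, regarded as a realization of the coend of
the forgetful functor on finite-dimensional right C-comodules via
i_X(β ⊗ x) = β(x₍₀₎)x₍₁₎, the coalgebra structure induced on C by the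
universal property (from the comatrix coalgebras on the Hom_k(X,X)) coincides
with the original (Δ, ε); in particular Coend(T) ≅ C as coalgebras. -/

open TensorProduct

noncomputable section
variable (k : Type) [Field k]

def smulRightL {M : Type} [AddCommGroup M] [Module k M] (x : M) :
    (M →ₗ[k] k) →ₗ[k] (M →ₗ[k] M) where
  toFun f := f.smulRight x
  map_add' f g := by ext y; simp [add_smul]
  map_smul' c f := by ext y; simp [smul_smul]

/-- The comatrix comultiplication on `Hom_k(M,M)` for finite-dimensional `M`:
`Δ(β ⊗ x) = Σ_i (β ⊗ x_i) ⊗ (x^i ⊗ x)`.  Its counit is the trace. -/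
def comatrixComul (M : Type) [AddCommGroup M] [Module k M] [Module.Finite k M] :
    (M →ₗ[k] M) →ₗ[k] ((M →ₗ[k] M) ⊗[k] (M →ₗ[k] M)) :=
  let b := Module.Free.chooseBasis k M
  ∑ i, ∑ l,
    ((TensorProduct.mk k (M →ₗ[k] M) (M →ₗ[k] M)).flip ((b.coord l).smulRight (b i))) ∘ₗ
      (smulRightL k (b l)) ∘ₗ (LinearMap.llcomp k M M k (b.coord i))

variable (C : Type) [AddCommGroup C] [Module k C] [Coalgebra k C]

structure FdComod where
  carrier : Type
  [ab : AddCommGroup carrier]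
  [mod : Module k carrier]
  [fin : FiniteDimensional k carrier]
  ρ : carrier →ₗ[k] carrier ⊗[k] C
  coassoc : (TensorProduct.assoc k carrier C C).toLinearMap ∘ₗ
      (TensorProduct.map ρ LinearMap.id) ∘ₗ ρ
      = (TensorProduct.map LinearMap.id Coalgebra.comul) ∘ₗ ρ
  counit : (TensorProduct.map LinearMap.id Coalgebra.counit) ∘ₗ ρ
      = (TensorProduct.rid k carrier).symm.toLinearMap

attribute [instance] FdComod.ab FdComod.mod FdComod.fin

/-- The canonical maps `i_X : Hom_k(X,X) → C`, `β ⊗ x ↦ β(x₍₀₎)x₍₁₎`. -/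
def canI (X : FdComod k C) : (X.carrier →ₗ[k] X.carrier) →ₗ[k] C :=
  let b := Module.Free.chooseBasis k X.carrier
  ∑ j, ((TensorProduct.lid k C).toLinearMap ∘ₗ
          TensorProduct.map (b.coord j) LinearMap.id ∘ₗ X.ρ) ∘ₗ
        (LinearMap.applyₗ (b j) : (X.carrier →ₗ[k] X.carrier) →ₗ[k] X.carrier)

/-! The identities for `Δ` and `ε` are linear in `f ∈ End(X)`, so it suffices to check them on
rank-one maps `β.smulRight x`, which `i_X` sends to the matrix coefficients `β(x₍₀₎) x₍₁₎`; there
they are the coassociativity and counit axioms of the comodule `X`. Uniqueness holds because the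
`i_X` are jointly surjective: every `c ∈ C` lies in a finite-dimensional subcomodule `W`, spanned by
the elements `c₁ eⁱ(c₂)` for a basis `(eᵢ)` of `C`, and `c = i_W(ε ⊗ c)`. -/

open LinearMap Module.Free

section RankOne

variable {R M : Type} [CommSemiring R] [AddCommMonoid M] [Module R M] [Module.Free R M]
  [Module.Finite R M]

theorem LinearMap.eq_sum_smulRight_coord (f : M →ₗ[R] M) :
    f = ∑ i, ((chooseBasis R M).coord i).smulRight (f (chooseBasis R M i)) := by
  ext y
  simp only [LinearMap.sum_apply, LinearMap.smulRight_apply, Module.Basis.coord_apply]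
  simp_rw [← map_smul, ← map_sum, Module.Basis.sum_repr]

theorem LinearMap.ext_smulRight {N : Type} [AddCommMonoid N] [Module R N]
    {F G : (M →ₗ[R] M) →ₗ[R] N}
    (h : ∀ (β : M →ₗ[R] R) (x : M), F (β.smulRight x) = G (β.smulRight x)) : F = G := by
  ext f
  rw [f.eq_sum_smulRight_coord, map_sum, map_sum]
  exact Finset.sum_congr rfl fun i _ => h _ _

end RankOne

section RangeRTensor

variable {R M P N N' : Type} [CommSemiring R] [AddCommMonoid M] [Module R M] [AddCommMonoid P]
  [Module R P] [AddCommMonoid N] [Module R N] [AddCommMonoid N'] [Module R N']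

theorem LinearMap.lTensor_mem_range_rTensor (f : M →ₗ[R] P) (g : N →ₗ[R] N')
    {t : P ⊗[R] N} (ht : t ∈ range (f.rTensor N)) :
    g.lTensor P t ∈ range (f.rTensor N') := by
  obtain ⟨s, rfl⟩ := ht
  refine ⟨g.lTensor M s, ?_⟩
  rw [← LinearMap.comp_apply, rTensor_comp_lTensor, ← lTensor_comp_rTensor, LinearMap.comp_apply]

theorem Submodule.rid_mem_of_mem_range_rTensor_subtype (W : Submodule R M)
    {t : M ⊗[R] R} (ht : t ∈ range (W.subtype.rTensor R)) : TensorProduct.rid R M t ∈ W := by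
  obtain ⟨s, rfl⟩ := ht
  induction s using TensorProduct.induction_on with
  | zero => simp
  | tmul w r => simpa using W.smul_mem r w.2
  | add s s' hs hs' => simpa using add_mem hs hs'

theorem Submodule.rTensor_subtype_injective (W : Submodule R M) (N : Type) [AddCommMonoid N]
    [Module R N] [Module.Flat R N] : Function.Injective (W.subtype.rTensor N) :=
  Module.Flat.rTensor_preserves_injective_linearMap W.subtype W.injective_subtype

end RangeRTensor

section

variable {k} {C}

theorem comatrixComul_smulRight {M : Type} [AddCommGroup M] [Module k M] [Module.Finite k M]
    (β : M →ₗ[k] k) (x : M) :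
    comatrixComul k M (β.smulRight x)
      = ∑ l, β.smulRight (chooseBasis k M l) ⊗ₜ[k] ((chooseBasis k M).coord l).smulRight x := by
  simp only [comatrixComul, smulRightL, LinearMap.sum_apply, LinearMap.comp_apply,
    LinearMap.llcomp_apply', LinearMap.coe_mk, AddHom.coe_mk, LinearMap.flip_apply,
    TensorProduct.mk_apply]
  set b := chooseBasis k M
  have hcoord (i) : b.coord i ∘ₗ β.smulRight x = b.repr x i • β := by
    ext y
    simp [Module.Basis.coord_apply, mul_comm]
  rw [Finset.sum_comm]
  refine Finset.sum_congr rfl fun l _ => ?_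
  simp only [hcoord]
  simp only [← smulRightₗ_apply, map_smul, LinearMap.smul_apply, smul_tmul]
  simp only [← map_smul, ← tmul_sum, ← map_sum, b.sum_repr]

namespace FdComod

variable (X : FdComod k C)

/-- The matrix coefficient `x ↦ β(x₍₀₎) x₍₁₎`. -/
def coeff (β : X.carrier →ₗ[k] k) : X.carrier →ₗ[k] C :=
  (TensorProduct.lid k C).toLinearMap ∘ₗ β.rTensor C ∘ₗ X.ρ

theorem lTensor_counit_ρ (x : X.carrier) :
    Coalgebra.counit.lTensor X.carrier (X.ρ x) = x ⊗ₜ[k] 1 :=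
  congr($X.counit x)

theorem assoc_rTensor_ρ (x : X.carrier) :
    TensorProduct.assoc k X.carrier C C (X.ρ.rTensor C (X.ρ x))
      = Coalgebra.comul.lTensor X.carrier (X.ρ x) :=
  congr($X.coassoc x)

theorem ρ_eq_sum_tmul_coeff {ι : Type} [Fintype ι] (b : Module.Basis ι k X.carrier) (x : X.carrier) :
    X.ρ x = ∑ l, b l ⊗ₜ[k] X.coeff (b.coord l) x := by
  classical
  conv_lhs => rw [← (equivFinsuppOfBasisLeft b).symm_apply_apply (X.ρ x),
    equivFinsuppOfBasisLeft_symm_apply, Finsupp.sum_fintype _ _ (by simp)]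
  simp [equivFinsuppOfBasisLeft_apply, coeff]

theorem coeff_eq_sum {ι : Type} [Fintype ι] (b : Module.Basis ι k X.carrier)
    (β : X.carrier →ₗ[k] k) (x : X.carrier) :
    X.coeff β x = ∑ l, β (b l) • X.coeff (b.coord l) x := by
  conv_lhs => rw [coeff, LinearMap.comp_apply, LinearMap.comp_apply, X.ρ_eq_sum_tmul_coeff b x]
  simp

theorem canI_smulRight (β : X.carrier →ₗ[k] k) (x : X.carrier) :
    canI k C X (β.smulRight x) = X.coeff β x := by
  rw [X.coeff_eq_sum (chooseBasis k X.carrier)]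
  simp [canI, coeff, rTensor]

theorem counit_coeff (β : X.carrier →ₗ[k] k) (x : X.carrier) :
    Coalgebra.counit (X.coeff β x) = β x := by
  have hnat : Coalgebra.counit ∘ₗ (TensorProduct.lid k C).toLinearMap ∘ₗ β.rTensor C
      = β ∘ₗ (TensorProduct.rid k X.carrier).toLinearMap ∘ₗ Coalgebra.counit.lTensor _ := by
    ext y c
    simp [mul_comm]
  have := congr($hnat (X.ρ x))
  simp only [LinearMap.comp_apply, LinearEquiv.coe_coe] at this
  simpa [coeff, lTensor_counit_ρ] using this

theorem comul_coeff {ι : Type} [Fintype ι] (b : Module.Basis ι k X.carrier)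
    (β : X.carrier →ₗ[k] k) (x : X.carrier) :
    Coalgebra.comul (X.coeff β x) = ∑ l, X.coeff β (b l) ⊗ₜ[k] X.coeff (b.coord l) x := by
  have hcomul : Coalgebra.comul ∘ₗ (TensorProduct.lid k C).toLinearMap ∘ₗ β.rTensor C
      = (TensorProduct.lid k (C ⊗[k] C)).toLinearMap ∘ₗ β.rTensor (C ⊗[k] C) ∘ₗ
          Coalgebra.comul.lTensor X.carrier := by
    ext y c
    simp
  have hassoc : (TensorProduct.lid k (C ⊗[k] C)).toLinearMap ∘ₗ β.rTensor (C ⊗[k] C) ∘ₗ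
        (TensorProduct.assoc k X.carrier C C).toLinearMap
      = ((TensorProduct.lid k C).toLinearMap ∘ₗ β.rTensor C).rTensor C := by
    apply TensorProduct.ext_threefold
    intro y c d
    simp [smul_tmul']
  calc Coalgebra.comul (X.coeff β x)
      = TensorProduct.lid k (C ⊗[k] C) (β.rTensor (C ⊗[k] C)
          (TensorProduct.assoc k X.carrier C C (X.ρ.rTensor C (X.ρ x)))) := by
        rw [assoc_rTensor_ρ]
        exact congr($hcomul (X.ρ x))
    _ = ((TensorProduct.lid k C).toLinearMap ∘ₗ β.rTensor C).rTensor C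
          (X.ρ.rTensor C (X.ρ x)) := congr($hassoc _)
    _ = ∑ l, X.coeff β (b l) ⊗ₜ[k] X.coeff (b.coord l) x := by
        conv_lhs => rw [X.ρ_eq_sum_tmul_coeff b x]
        simp [coeff]

theorem comul_comp_canI :
    Coalgebra.comul ∘ₗ canI k C X
      = TensorProduct.map (canI k C X) (canI k C X) ∘ₗ comatrixComul k X.carrier := by
  refine LinearMap.ext_smulRight fun β x => ?_
  simp only [LinearMap.comp_apply, canI_smulRight, comatrixComul_smulRight, map_sum,
    TensorProduct.map_tmul, X.comul_coeff (chooseBasis k X.carrier)]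

theorem counit_comp_canI :
    Coalgebra.counit ∘ₗ canI k C X = LinearMap.trace k X.carrier :=
  LinearMap.ext_smulRight fun β x => by
    rw [LinearMap.comp_apply, canI_smulRight, counit_coeff, trace_smulRight]

end FdComod

theorem comul_rid_lTensor_comul (f : C →ₗ[k] k) (c : C) :
    Coalgebra.comul (TensorProduct.rid k C (f.lTensor C (Coalgebra.comul c)))
      = ((TensorProduct.rid k C).toLinearMap ∘ₗ f.lTensor C).lTensor C
          (Coalgebra.comul.lTensor C (Coalgebra.comul c)) := by
  have hnat : Coalgebra.comul ∘ₗ (TensorProduct.rid k C).toLinearMap ∘ₗ f.lTensor C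
      = (TensorProduct.rid k (C ⊗[k] C)).toLinearMap ∘ₗ f.lTensor (C ⊗[k] C) ∘ₗ
          Coalgebra.comul.rTensor C := by
    ext c d
    simp
  have hassoc : (TensorProduct.rid k (C ⊗[k] C)).toLinearMap ∘ₗ f.lTensor (C ⊗[k] C) ∘ₗ
        (TensorProduct.assoc k C C C).symm.toLinearMap
      = ((TensorProduct.rid k C).toLinearMap ∘ₗ f.lTensor C).lTensor C := by
    ext a b c
    simp [tmul_smul]
  calc Coalgebra.comul (TensorProduct.rid k C (f.lTensor C (Coalgebra.comul c)))
      = TensorProduct.rid k (C ⊗[k] C) (f.lTensor (C ⊗[k] C)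
          (Coalgebra.comul.rTensor C (Coalgebra.comul c))) := congr($hnat (Coalgebra.comul c))
    _ = TensorProduct.rid k (C ⊗[k] C) (f.lTensor (C ⊗[k] C) ((TensorProduct.assoc k C C C).symm
          (Coalgebra.comul.lTensor C (Coalgebra.comul c)))) := by
        rw [Coalgebra.coassoc_symm_apply]
    _ = _ := congr($hassoc _)

theorem exists_finiteDimensional_subcomodule (c : C) :
    ∃ W : Submodule k C, FiniteDimensional k W ∧ c ∈ W ∧
      ∀ w ∈ W, Coalgebra.comul w ∈ range (W.subtype.rTensor C) := by
  classical
  let e := chooseBasis k C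
  let a := equivFinsuppOfBasisRight e (Coalgebra.comul (R := k) c)
  let W := Submodule.span k (a.frange : Set C)
  have hcomul : Coalgebra.comul c ∈ range (W.subtype.rTensor C) := by
    rw [← (equivFinsuppOfBasisRight e).symm_apply_apply (Coalgebra.comul c),
      equivFinsuppOfBasisRight_symm_apply]
    refine Submodule.finsuppSum_mem _ _ _ _ fun i hi => ⟨⟨a i, ?_⟩ ⊗ₜ[k] e i, rfl⟩
    exact Submodule.subset_span (Finsupp.mem_frange.mpr ⟨hi, i, rfl⟩)
  refine ⟨W, inferInstance, ?_, fun w hw => ?_⟩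
  · have hc : TensorProduct.rid k C (Coalgebra.counit.lTensor C (Coalgebra.comul c)) = c := by
      simp
    rw [← hc]
    exact W.rid_mem_of_mem_range_rTensor_subtype (lTensor_mem_range_rTensor _ _ hcomul)
  · suffices W ≤ (range (W.subtype.rTensor C)).comap Coalgebra.comul from this hw
    rw [Submodule.span_le]
    rintro _ hy
    obtain ⟨-, i, rfl⟩ := Finsupp.mem_frange.mp hy
    rw [SetLike.mem_coe, Submodule.mem_comap, equivFinsuppOfBasisRight_apply,
      comul_rid_lTensor_comul]
    exact lTensor_mem_range_rTensor _ _ (lTensor_mem_range_rTensor _ _ hcomul)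

namespace FdComod

variable (W : Submodule k C)
  (hW : ∀ w ∈ W, Coalgebra.comul w ∈ range (W.subtype.rTensor C))

/-- `Δ` restricted to `W`, read back in `W ⊗ C` through the injection `W ⊗ C → C ⊗ C`. -/
def subcoaction : W →ₗ[k] W ⊗[k] C :=
  (LinearEquiv.ofInjective _ (W.rTensor_subtype_injective C)).symm.toLinearMap ∘ₗ
    (Coalgebra.comul ∘ₗ W.subtype).codRestrict _ fun w => hW w w.2

theorem rTensor_subtype_subcoaction (w : W) :
    W.subtype.rTensor C (subcoaction W hW w) = Coalgebra.comul (w : C) :=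
  congrArg Subtype.val
    ((LinearEquiv.ofInjective _ (W.rTensor_subtype_injective C)).apply_symm_apply _)

theorem subcoaction_coassoc :
    (TensorProduct.assoc k W C C).toLinearMap ∘ₗ
        TensorProduct.map (subcoaction W hW) LinearMap.id ∘ₗ subcoaction W hW
      = TensorProduct.map LinearMap.id Coalgebra.comul ∘ₗ subcoaction W hW := by
  ext w
  apply W.rTensor_subtype_injective (C ⊗[k] C)
  have hsub : (W.subtype.rTensor C).rTensor C ∘ₗ (subcoaction W hW).rTensor C
      = Coalgebra.comul.rTensor C ∘ₗ W.subtype.rTensor C := by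
    rw [← rTensor_comp, ← rTensor_comp]
    congr 1
    exact LinearMap.ext (rTensor_subtype_subcoaction W hW)
  calc W.subtype.rTensor (C ⊗[k] C) (TensorProduct.assoc k W C C
          ((subcoaction W hW).rTensor C (subcoaction W hW w)))
      = TensorProduct.assoc k C C C ((W.subtype.rTensor C).rTensor C
          ((subcoaction W hW).rTensor C (subcoaction W hW w))) := by
        rw [rTensor_tensor]
        simp
    _ = Coalgebra.comul.lTensor C (Coalgebra.comul (w : C)) := by
        rw [← LinearMap.comp_apply, hsub, LinearMap.comp_apply, rTensor_subtype_subcoaction,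
          Coalgebra.coassoc_apply]
    _ = W.subtype.rTensor (C ⊗[k] C) (Coalgebra.comul.lTensor W (subcoaction W hW w)) := by
        rw [← LinearMap.comp_apply (rTensor _ W.subtype), rTensor_comp_lTensor,
          ← lTensor_comp_rTensor, LinearMap.comp_apply, rTensor_subtype_subcoaction]

theorem subcoaction_counit :
    TensorProduct.map LinearMap.id Coalgebra.counit ∘ₗ subcoaction W hW
      = (TensorProduct.rid k W).symm.toLinearMap := by
  ext w
  apply W.rTensor_subtype_injective k
  change W.subtype.rTensor k (Coalgebra.counit.lTensor W (subcoaction W hW w)) = _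
  rw [← LinearMap.comp_apply, rTensor_comp_lTensor, ← lTensor_comp_rTensor,
    LinearMap.comp_apply, rTensor_subtype_subcoaction, Coalgebra.lTensor_counit_comul]
  simp

def ofSubcomodule [FiniteDimensional k W] : FdComod k C where
  carrier := W
  ρ := subcoaction W hW
  coassoc := subcoaction_coassoc W hW
  counit := subcoaction_counit W hW

theorem exists_canI_eq (c : C) :
    ∃ (X : FdComod k C) (f : X.carrier →ₗ[k] X.carrier), canI k C X f = c := by
  obtain ⟨W, _, hc, hW⟩ := exists_finiteDimensional_subcomodule (k := k) c
  refine ⟨ofSubcomodule W hW, (Coalgebra.counit ∘ₗ W.subtype).smulRight ⟨c, hc⟩, ?_⟩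
  calc canI k C (ofSubcomodule W hW) ((Coalgebra.counit ∘ₗ W.subtype).smulRight ⟨c, hc⟩)
      = (ofSubcomodule W hW).coeff (Coalgebra.counit ∘ₗ W.subtype) ⟨c, hc⟩ :=
        canI_smulRight _ _ _
    _ = TensorProduct.lid k C (Coalgebra.counit.rTensor C
          (W.subtype.rTensor C (subcoaction W hW ⟨c, hc⟩))) := by
        rw [← LinearMap.comp_apply (rTensor C _), ← rTensor_comp]
        rfl
    _ = c := by
        rw [rTensor_subtype_subcoaction, Coalgebra.rTensor_counit_comul, TensorProduct.lid_tmul,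
          one_smul]

end FdComod

theorem LinearMap.ext_of_comp_canI {N : Type} [AddCommGroup N] [Module k N] {F G : C →ₗ[k] N}
    (h : ∀ X : FdComod k C, F ∘ₗ canI k C X = G ∘ₗ canI k C X) : F = G := by
  ext c
  obtain ⟨X, f, rfl⟩ := FdComod.exists_canI_eq (k := k) c
  exact congr($(h X) f)

end

/-- The coalgebra structure induced on `C` as a realization of `Coend(T)` is
exactly the original coalgebra structure `(Δ, ε)` of `C`. -/
theorem induced_coalgebra_structure_eq :
    (∀ X : FdComod k C,
        Coalgebra.comul ∘ₗ canI k C X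
          = (TensorProduct.map (canI k C X) (canI k C X)) ∘ₗ comatrixComul k X.carrier) ∧
    (∀ X : FdComod k C,
        (Coalgebra.counit : C →ₗ[k] k) ∘ₗ canI k C X = LinearMap.trace k X.carrier) ∧
    (∀ Δc : C →ₗ[k] C ⊗[k] C,
        (∀ X : FdComod k C,
          Δc ∘ₗ canI k C X
            = (TensorProduct.map (canI k C X) (canI k C X)) ∘ₗ comatrixComul k X.carrier) →
        Δc = Coalgebra.comul) ∧
    (∀ εc : C →ₗ[k] k,
        (∀ X : FdComod k C, εc ∘ₗ canI k C X = LinearMap.trace k X.carrier) →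
        εc = Coalgebra.counit) :=
  ⟨FdComod.comul_comp_canI, FdComod.counit_comp_canI,
    fun _ hΔ => LinearMap.ext_of_comp_canI fun X => (hΔ X).trans (X.comul_comp_canI).symm,
    fun _ hε => LinearMap.ext_of_comp_canI fun X => (hε X).trans (X.counit_comp_canI).symm⟩
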